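/- Under the choices of epistemic priors p̃(u) ∝ exp(H[q(x|u)]) and p̃(x) ∝ exp(-H[q(y|x)]), with q(y,x,u) = q(u) q(x|u) q(y|x), the total free energy with epistemic and preference priors decomposes as F[q] = E_{q(u)}[G(u)] + KL(q(y,x,u) || p(y,x,u)) + c for a constant c independent of u, where G(u) = E_{q(y,x|u)}[log(q(x|u)/p̂(x)) - log q(y|x)]. -/
import Mathlib

open Finset

private lemma log_piece (a b c P Q Zu Zx hu hx : ℝ)
    (ha : 0 ≤ a) (hb : 0 ≤ b) (hc : 0 ≤ c)
    (hP : 0 < P) (hQ : 0 < Q) (hZu : 0 < Zu) (hZx : 0 < Zx) :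
    a * b * c * Real.log ((a * b * c) /
        (P * Q * (Real.exp hu / Zu) * (Real.exp (-hx) / Zx)))
      = a * b * c * Real.log ((a * b * c) / P)
        + a * b * c * (-Real.log Q - hu + hx + Real.log Zu + Real.log Zx) := by
  rcases eq_or_lt_of_le (mul_nonneg (mul_nonneg ha hb) hc) with h | h
  · rw [← h]; ring
  · have hD : (0:ℝ) < P * Q * (Real.exp hu / Zu) * (Real.exp (-hx) / Zx) := by positivity
    have hlogD : Real.log (P * Q * (Real.exp hu / Zu) * (Real.exp (-hx) / Zx))
        = Real.log P + Real.log Q + (hu - Real.log Zu) + (-hx - Real.log Zx) := by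
      rw [Real.log_mul (by positivity) (by positivity),
          Real.log_mul (by positivity) (by positivity),
          Real.log_mul (ne_of_gt hP) (ne_of_gt hQ),
          Real.log_div (Real.exp_ne_zero _) (ne_of_gt hZu),
          Real.log_div (Real.exp_ne_zero _) (ne_of_gt hZx),
          Real.log_exp, Real.log_exp]
    rw [Real.log_div (ne_of_gt h) (ne_of_gt hD),
        Real.log_div (ne_of_gt h) (ne_of_gt hP), hlogD]
    ring

/-- Expected Free Energy Theorem (structured form): with epistemic priors
    p̃(u) ∝ exp(H[q(x|u)]) and p̃(x) ∝ exp(-H[q(y|x)]), the augmented VFE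
    decomposes as expected EFE plus complexity plus a constant. -/
theorem efe_as_vfe_with_epistemic_priors
    {Y X U : Type*} [Fintype Y] [Fintype X] [Fintype U]
    (qU : U → ℝ) (qX : U → X → ℝ) (qY : X → Y → ℝ)
    (p : Y × X × U → ℝ) (phat : X → ℝ)
    (hqU0 : ∀ u, 0 ≤ qU u) (hqU1 : ∑ u, qU u = 1)
    (hqX0 : ∀ u x, 0 ≤ qX u x) (hqX1 : ∀ u, ∑ x, qX u x = 1)
    (hqY0 : ∀ x y, 0 ≤ qY x y) (hqY1 : ∀ x, ∑ y, qY x y = 1)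
    (hp : ∀ yxu, 0 < p yxu) (hp1 : ∑ yxu, p yxu = 1)
    (hphat : ∀ x, 0 < phat x)
    (Hu : U → ℝ) (hHu : ∀ u, Hu u = -(∑ x, qX u x * Real.log (qX u x)))
    (Hx : X → ℝ) (hHx : ∀ x, Hx x = -(∑ y, qY x y * Real.log (qY x y)))
    (Zu Zx : ℝ) (hZu : 0 < Zu) (hZx : 0 < Zx) :
    (∑ u, ∑ x, ∑ y, qU u * qX u x * qY x y *
        Real.log ((qU u * qX u x * qY x y) /
            (p (y, x, u) * phat x * (Real.exp (Hu u) / Zu)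
              * (Real.exp (-(Hx x)) / Zx))))
      = (∑ u, qU u *
            (∑ x, ∑ y, qX u x * qY x y *
                (Real.log (qX u x / phat x) - Real.log (qY x y))))
        + (∑ u, ∑ x, ∑ y, qU u * qX u x * qY x y *
              Real.log ((qU u * qX u x * qY x y) / p (y, x, u)))
        + (Real.log Zu + Real.log Zx) := by
  set C : ℝ := Real.log Zu + Real.log Zx with hC
  -- the per-u decomposition
  have key : ∀ u,
      (∑ x, ∑ y, qU u * qX u x * qY x y *
        Real.log ((qU u * qX u x * qY x y) /
            (p (y, x, u) * phat x * (Real.exp (Hu u) / Zu)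
              * (Real.exp (-(Hx x)) / Zx))))
      = qU u * (∑ x, ∑ y, qX u x * qY x y *
                (Real.log (qX u x / phat x) - Real.log (qY x y)))
        + (∑ x, ∑ y, qU u * qX u x * qY x y *
              Real.log ((qU u * qX u x * qY x y) / p (y, x, u)))
        + qU u * C := by
    intro u
    -- split each y-sum using log_piece
    have step1 : ∀ x,
        (∑ y, qU u * qX u x * qY x y *
          Real.log ((qU u * qX u x * qY x y) /
            (p (y, x, u) * phat x * (Real.exp (Hu u) / Zu)
              * (Real.exp (-(Hx x)) / Zx))))
        = (∑ y, qU u * qX u x * qY x y *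
              Real.log ((qU u * qX u x * qY x y) / p (y, x, u)))
          + qU u * qX u x * (-Real.log (phat x) - Hu u + Hx x + C) := by
      intro x
      have e : ∀ y ∈ (univ : Finset Y),
          qU u * qX u x * qY x y *
            Real.log ((qU u * qX u x * qY x y) /
              (p (y, x, u) * phat x * (Real.exp (Hu u) / Zu)
                * (Real.exp (-(Hx x)) / Zx)))
          = qU u * qX u x * qY x y *
              Real.log ((qU u * qX u x * qY x y) / p (y, x, u))
            + qU u * qX u x * qY x y *
              (-Real.log (phat x) - Hu u + Hx x + Real.log Zu + Real.log Zx) := by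
        intro y _
        exact log_piece (qU u) (qX u x) (qY x y) (p (y, x, u)) (phat x) Zu Zx
          (Hu u) (Hx x) (hqU0 u) (hqX0 u x) (hqY0 x y) (hp _) (hphat x) hZu hZx
      rw [Finset.sum_congr rfl e, Finset.sum_add_distrib]
      congr 1
      have : (∑ y, qU u * qX u x * qY x y *
            (-Real.log (phat x) - Hu u + Hx x + Real.log Zu + Real.log Zx))
          = qU u * qX u x *
              (-Real.log (phat x) - Hu u + Hx x + Real.log Zu + Real.log Zx)
            * ∑ y, qY x y := by
        rw [Finset.mul_sum]
        exact Finset.sum_congr rfl fun y _ => by ring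
      rw [this, hqY1, hC]
      ring
    rw [Finset.sum_congr rfl (fun x _ => step1 x), Finset.sum_add_distrib]
    -- now handle the ∑_x of the "stuff" term
    have hx_inner : ∀ x,
        (∑ y, qX u x * qY x y *
            (Real.log (qX u x / phat x) - Real.log (qY x y)))
        = qX u x * Real.log (qX u x / phat x) + qX u x * Hx x := by
      intro x
      have : (∑ y, qX u x * qY x y *
              (Real.log (qX u x / phat x) - Real.log (qY x y)))
          = qX u x * Real.log (qX u x / phat x) * (∑ y, qY x y)
            - qX u x * (∑ y, qY x y * Real.log (qY x y)) := by
        rw [Finset.mul_sum, Finset.mul_sum, ← Finset.sum_sub_distrib]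
        exact Finset.sum_congr rfl fun y _ => by ring
      rw [this, hqY1, hHx]
      ring
    have hsplit : ∀ x, qX u x * Real.log (qX u x / phat x)
        = qX u x * Real.log (qX u x) - qX u x * Real.log (phat x) := by
      intro x
      rcases eq_or_lt_of_le (hqX0 u x) with h | h
      · simp [← h]
      · rw [Real.log_div (ne_of_gt h) (ne_of_gt (hphat x))]; ring
    have l1 : (∑ x, qU u * qX u x * (-Real.log (phat x) - Hu u + Hx x + C))
        = qU u * ((∑ x, qX u x * (-Real.log (phat x) + Hx x)) + (-Hu u + C)) := by
      have e2 : (∑ x, qU u * qX u x * (-Real.log (phat x) - Hu u + Hx x + C))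
          = qU u * ((∑ x, qX u x * (-Real.log (phat x) + Hx x))
              + (∑ x, qX u x) * (-Hu u + C)) := by
        rw [Finset.sum_mul, ← Finset.sum_add_distrib, Finset.mul_sum]
        exact Finset.sum_congr rfl fun x _ => by ring
      rw [e2, hqX1 u, one_mul]
    have r1 : (∑ x, ∑ y, qX u x * qY x y *
            (Real.log (qX u x / phat x) - Real.log (qY x y)))
        = (∑ x, qX u x * Real.log (qX u x))
          + ∑ x, qX u x * (-Real.log (phat x) + Hx x) := by
      rw [Finset.sum_congr rfl (fun x (_ : x ∈ univ) => hx_inner x),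
          ← Finset.sum_add_distrib]
      exact Finset.sum_congr rfl fun x _ => by rw [hsplit x]; ring
    have h2 : (∑ x, qX u x * Real.log (qX u x)) = -Hu u := by
      rw [hHu]; ring
    rw [l1, r1, h2]
    ring
  rw [Finset.sum_congr rfl (fun u (_ : u ∈ univ) => key u),
      Finset.sum_add_distrib, Finset.sum_add_distrib, ← Finset.sum_mul, hqU1, one_mul]
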